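/- arXiv:2401.04277 — 4 statements merged into one kernel-verified Lean document; each statement's English description precedes it below -/
import Mathlib

section
/- If the center of a group G is torsion-free, then the factor Z_2(G)/Z_1(G) of the upper central series is torsion-free. -/
/-! For `x ∈ Z₂(G)` every commutator `⁅x, g⁆` is central, so `⁅xⁿ, g⁆ = ⁅x, g⁆ⁿ`. If moreover
`xⁿ` is central, then `⁅x, g⁆ⁿ = 1`, and torsion-freeness of the center gives `⁅x, g⁆ = 1`
for every `g`, i.e. `x ∈ Z₁(G)`. -/

open scoped commutatorElement

theorem commutatorElement_pow_left_of_commute {G : Type*} [Group G] {x g : G}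
    (h : Commute x ⁅x, g⁆) (n : ℕ) : ⁅x ^ n, g⁆ = ⁅x, g⁆ ^ n := by
  induction n with
  | zero => simp
  | succ n ih =>
    rw [pow_succ', commutatorElement_mul_left_eq_conj_mul, ih, (h.pow_right n).eq,
      mul_inv_cancel_right, pow_succ]

namespace Subgroup

theorem mem_center_of_pow_mem_center {G : Type*} [Group G]
    (hZ : ∀ g : center G, g ≠ 1 → ¬IsOfFinOrder g) {x : G} (hx : x ∈ upperCentralSeries G 2)
    {n : ℕ} (hn : n ≠ 0) (hxn : x ^ n ∈ center G) : x ∈ center G := by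
  refine mem_center_iff.mpr fun g ↦ ?_
  have hc : ⁅x, g⁆ ∈ center G := by
    simpa only [upperCentralSeries_one] using mem_upperCentralSeries_succ_iff.mp hx g
  have hc_pow : ⁅x, g⁆ ^ n = 1 := by
    rw [← commutatorElement_pow_left_of_commute (mem_center_iff.mp hc x),
      commutatorElement_eq_one_iff_mul_comm]
    exact (mem_center_iff.mp hxn g).symm
  have hc_one : ⁅x, g⁆ = 1 := by
    by_contra hne
    exact hZ ⟨_, hc⟩ (fun h ↦ hne (congrArg Subtype.val h))
      (isOfFinOrder_iff_pow_eq_one.mpr ⟨n, hn.bot_lt, Subtype.ext hc_pow⟩)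
  exact (commutatorElement_eq_one_iff_mul_comm.mp hc_one).symm

end Subgroup

/-- If the center of a group `G` is torsion-free, then the factor `Z₂(G)/Z₁(G)` of the
upper central series is torsion-free: any element of `Z₂` some nonzero power of which lies
in `Z₁` already lies in `Z₁`. -/
theorem upperCentral_factor_two_torsionFree (G : Type*) [Group G]
    (hZ : ∀ g : Subgroup.center G, g ≠ 1 → ¬IsOfFinOrder g) :
    ∀ x ∈ upperCentralSeries G 2, ∀ n : ℕ, n ≠ 0 →
      x ^ n ∈ upperCentralSeries G 1 → x ∈ upperCentralSeries G 1 := by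
  intro x hx n hn hxn
  have h_one : upperCentralSeries G 1 = Subgroup.center G := Subgroup.upperCentralSeries_one G
  rw [h_one] at hxn ⊢
  exact Subgroup.mem_center_of_pow_mem_center hZ hx hn hxn
end

section
/- In a torsion-free nilpotent group, roots are unique: if a^n = b^n for a nonzero integer n, then a = b. -/
/-- A monoid is torsion-free if no nontrivial elements have finite order
(the definition `Monoid.IsTorsionFree` of the older Mathlib, since removed). -/
def Monoid.IsTorsionFree (G : Type*) [Monoid G] : Prop :=
  ∀ g : G, g ≠ 1 → ¬IsOfFinOrder g

/-!
If `x` is central modulo `Z(G)` and `x ^ n` is central, then every `⁅x, y⁆` is central with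
`⁅x, y⁆ ^ n = ⁅x ^ n, y⁆ = 1`; so torsion-freeness of `Z(G)` passes to the centre of `G ⧸ Z(G)`.
Inducting on the nilpotency class, `G ⧸ Z(G)` then has unique roots, and `a ^ n = b ^ n` forces
`b = a * z` with `z` central and `z ^ n = 1`, hence `z = 1`. Unique roots is Mathlib's
`IsMulTorsionFree` (injective powers), which for non-commutative groups is stronger than
`Monoid.IsTorsionFree`.
-/

open Subgroup
open scoped commutatorElement

section

variable {G : Type*} [Group G]

theorem Monoid.IsTorsionFree.subgroup (hT : Monoid.IsTorsionFree G) (H : Subgroup G) :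
    Monoid.IsTorsionFree H := fun x hx hfin =>
  hT x (by exact_mod_cast hx) (Submonoid.isOfFinOrder_coe.mpr hfin)

theorem Monoid.IsTorsionFree.eq_one_of_mem_of_pow_eq_one {H : Subgroup G}
    (hH : Monoid.IsTorsionFree H) {x : G} (hx : x ∈ H) {n : ℕ} (hn : n ≠ 0) (h : x ^ n = 1) :
    x = 1 := by
  by_contra hx1
  refine hH ⟨x, hx⟩ (by simpa [Subtype.ext_iff] using hx1) ?_
  exact isOfFinOrder_iff_pow_eq_one.mpr ⟨n, Nat.pos_of_ne_zero hn, Subtype.ext h⟩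

theorem commutatorElement_pow_left_of_mem_center {x y : G} (h : ⁅x, y⁆ ∈ center G) (n : ℕ) :
    ⁅x ^ n, y⁆ = ⁅x, y⁆ ^ n := by
  have hconj : y * x⁻¹ * y⁻¹ = x⁻¹ * ⁅x, y⁆ := by rw [commutatorElement_def]; group
  have hcomm : Commute x⁻¹ ⁅x, y⁆ := mem_center_iff.mp h x⁻¹
  calc ⁅x ^ n, y⁆ = x ^ n * (y * x⁻¹ * y⁻¹) ^ n := by
        rw [conj_pow, commutatorElement_def, inv_pow]; group
    _ = ⁅x, y⁆ ^ n := by rw [hconj, hcomm.mul_pow, inv_pow, mul_inv_cancel_left]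

theorem mem_center_of_pow_mem_center (hZ : Monoid.IsTorsionFree (center G)) {x : G}
    (hx : ∀ y, ⁅x, y⁆ ∈ center G) {n : ℕ} (hn : n ≠ 0) (hxn : x ^ n ∈ center G) :
    x ∈ center G := by
  refine mem_center_iff.mpr fun y => ?_
  have hpow : ⁅x, y⁆ ^ n = 1 := by
    rw [← commutatorElement_pow_left_of_mem_center (hx y), commutatorElement_eq_one_iff_mul_comm]
    exact (mem_center_iff.mp hxn y).symm
  exact (commutatorElement_eq_one_iff_mul_comm.mp
    (hZ.eq_one_of_mem_of_pow_eq_one (hx y) hn hpow)).symm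

theorem Monoid.IsTorsionFree.center_quotient_center (hZ : Monoid.IsTorsionFree (center G)) :
    Monoid.IsTorsionFree (center (G ⧸ center G)) := by
  rintro ⟨q, hq⟩ hq1 hfin
  obtain ⟨x, rfl⟩ := QuotientGroup.mk_surjective q
  obtain ⟨n, hn, hxn⟩ := isOfFinOrder_iff_pow_eq_one.mp (Submonoid.isOfFinOrder_coe.mpr hfin)
  have hx : ∀ y, ⁅x, y⁆ ∈ center G := fun y => by
    rw [← QuotientGroup.eq_one_iff]
    change ⁅(x : G ⧸ center G), (y : G ⧸ center G)⁆ = 1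
    rw [commutatorElement_eq_one_iff_mul_comm]
    exact (mem_center_iff.mp hq _).symm
  have hxn' : x ^ n ∈ center G := (QuotientGroup.eq_one_iff _).mp (by simpa using hxn)
  exact hq1 (Subtype.ext ((QuotientGroup.eq_one_iff x).mpr
    (mem_center_of_pow_mem_center hZ hx hn.ne' hxn')))

theorem IsMulTorsionFree.of_quotient_center (hZ : Monoid.IsTorsionFree (center G))
    [IsMulTorsionFree (G ⧸ center G)] : IsMulTorsionFree G := by
  refine ⟨fun n hn a b (hab : a ^ n = b ^ n) => ?_⟩
  have hz : a⁻¹ * b ∈ center G := QuotientGroup.eq.mp <| pow_left_injective hn <| by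
    simpa using congrArg ((↑) : G → G ⧸ center G) hab
  have hzn : (a⁻¹ * b) ^ n = 1 := by
    have hcomm : Commute a (a⁻¹ * b) := mem_center_iff.mp hz a
    have hbn := hcomm.mul_pow n
    rw [mul_inv_cancel_left, ← hab] at hbn
    exact left_eq_mul.mp hbn
  rw [← mul_inv_cancel_left a b, hZ.eq_one_of_mem_of_pow_eq_one hz hn hzn, mul_one]

theorem Group.IsNilpotent.isMulTorsionFree_of_isTorsionFree_center [Group.IsNilpotent G]
    (hZ : Monoid.IsTorsionFree (center G)) : IsMulTorsionFree G := by
  refine Group.nilpotent_center_quotient_ind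
    (P := fun G _ _ => Monoid.IsTorsionFree (center G) → IsMulTorsionFree G) G
    (fun _ _ _ _ => inferInstance) (fun G _ _ ih hZ => ?_) hZ
  have := ih hZ.center_quotient_center
  exact .of_quotient_center hZ

end

/-- In a torsion-free nilpotent group roots are unique: if `a^n = b^n` for a nonzero
integer `n`, then `a = b`. -/
theorem unique_roots_of_torsionFree_nilpotent (G : Type*) [Group G]
    [Group.IsNilpotent G] (hT : Monoid.IsTorsionFree G)
    (a b : G) (n : ℤ) (hn : n ≠ 0) (h : a ^ n = b ^ n) : a = b :=
  have := Group.IsNilpotent.isMulTorsionFree_of_isTorsionFree_center (hT.subgroup (center G))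
  zpow_left_injective hn h
end

section
/- Let G be a torsion-free nilpotent group and a, b ∈ G with nonzero integers n, m such that a^n commutes with b^m. Then a commutes with b. -/
/-!
Roots are unique in a torsion-free nilpotent group, by induction on the nilpotency class: if
`x ^ k = y ^ k`, then `x` and its conjugate `y * x * y⁻¹` have the same `k`-th power and both
lie in `⟨x, [G, G]⟩`, whose class is smaller (its image in `G / γ₃ G` is abelian). Hence `y`
commutes with `x`, and `(x * y⁻¹) ^ k = 1` forces `x = y`. In Mathlib's terms this makes `G`
`IsMulTorsionFree` (injective powers, which for non-abelian groups is stronger than having no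
elements of finite order). Then `a ^ n` commuting with `b` forces `b a b⁻¹ = a` by comparing
`n`-th powers, and applying this twice gives the theorem.
-/

open scoped commutatorElement

namespace Subgroup

variable {G : Type*} [Group G]

theorem lowerCentralSeries_succ_le_of_commutator_le {H S : Subgroup G} {s : ℕ} (hHS : H ≤ S)
    (hH : ⁅H, H⁆ ≤ S.lowerCentralSeries (s + 1)) (k : ℕ) :
    H.lowerCentralSeries (k + 1) ≤ S.lowerCentralSeries (k + s + 1) := by
  induction k with
  | zero => simpa using hH
  | succ k ih =>
    rw [lowerCentralSeries_succ, show k + 1 + s + 1 = k + s + 1 + 1 by omega,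
      lowerCentralSeries_succ]
    exact commutator_mono ih hHS

theorem commutator_closure_insert_le (a : G) (N : Subgroup G) [N.Normal] :
    ⁅closure (insert a (N : Set G)), closure (insert a (N : Set G))⁆ ≤
      ⁅N, (⊤ : Subgroup G)⁆ := by
  set π := QuotientGroup.mk' ⁅N, (⊤ : Subgroup G)⁆
  have hcentral : ∀ n ∈ N, ∀ g, Commute (π n) (π g) := fun n hn g => by
    rw [← commutatorElement_eq_one_iff_commute, ← map_commutatorElement, ← MonoidHom.mem_ker,
      QuotientGroup.ker_mk']
    exact commutator_mem_commutator hn (mem_top g)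
  rw [← QuotientGroup.ker_mk' ⁅N, (⊤ : Subgroup G)⁆, ← map_eq_bot_iff, map_commutator,
    commutator_eq_bot_iff_le_centralizer, MonoidHom.map_closure, centralizer_closure, closure_le]
  rintro _ ⟨s, hs, rfl⟩ _ ⟨t, ht, rfl⟩
  rcases hs with rfl | hs
  · rcases ht with rfl | ht
    · rfl
    · exact hcentral t ht s
  · exact (hcentral s hs t).symm

theorem lowerCentralSeries_closure_insert_eq_bot {c : ℕ} (a : G)
    (hc : (⊤ : Subgroup G).lowerCentralSeries (c + 2) = ⊥) :
    (closure (insert a ((⊤ : Subgroup G).lowerCentralSeries 1 : Set G))).lowerCentralSeries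
      (c + 1) = ⊥ := by
  rw [eq_bot_iff, ← hc]
  exact lowerCentralSeries_succ_le_of_commutator_le le_top (commutator_closure_insert_le a _) c

end Subgroup

theorem eq_of_commute_of_pow_eq_pow {G : Type*} [Group G]
    (hG : ∀ g : G, g ≠ 1 → ¬IsOfFinOrder g) {x y : G} {k : ℕ} (hk : k ≠ 0)
    (hxy : Commute x y) (h : x ^ k = y ^ k) : x = y := by
  by_contra hne
  refine hG (x * y⁻¹) (mul_inv_eq_one.not.2 hne)
    (isOfFinOrder_iff_pow_eq_one.2 ⟨k, hk.bot_lt, ?_⟩)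
  rw [hxy.inv_right.mul_pow, inv_pow, h, mul_inv_cancel]

open Subgroup in
theorem pow_left_injective_of_lowerCentralSeries_eq_bot (c : ℕ) {G : Type*} [Group G]
    (hG : ∀ g : G, g ≠ 1 → ¬IsOfFinOrder g)
    (hc : (⊤ : Subgroup G).lowerCentralSeries (c + 1) = ⊥) {k : ℕ} (hk : k ≠ 0) :
    Function.Injective fun x : G => x ^ k := by
  induction c generalizing G with
  | zero =>
    intro x y (h : x ^ k = y ^ k)
    refine eq_of_commute_of_pow_eq_pow hG hk ?_ h
    rw [← commutatorElement_eq_one_iff_commute, ← mem_bot, ← hc]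
    exact commutator_mem_commutator (mem_top x) (mem_top y)
  | succ c ih =>
    intro x y (h : x ^ k = y ^ k)
    refine eq_of_commute_of_pow_eq_pow hG hk ?_ h
    set H := closure (insert x ((⊤ : Subgroup G).lowerCentralSeries 1 : Set G))
    have hxH : x ∈ H := subset_closure (Set.mem_insert x _)
    have hconjH : ⁅y, x⁆ * x ∈ H :=
      mul_mem (subset_closure (Or.inr (commutator_mem_commutator (mem_top y) (mem_top x)))) hxH
    rw [commutatorElement_def, inv_mul_cancel_right] at hconjH
    have hconj : (y * x * y⁻¹) ^ k = x ^ k := by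
      rw [conj_pow, h, (Commute.self_pow y k).eq, mul_inv_cancel_right]
    have hHc : (⊤ : Subgroup H).lowerCentralSeries (c + 1) = ⊥ := by
      rw [← map_eq_bot_iff_of_injective _ H.subtype_injective, top_subtype_lowerCentralSeries]
      exact lowerCentralSeries_closure_insert_eq_bot x hc
    have hHtf : ∀ g : H, g ≠ 1 → ¬IsOfFinOrder g := fun g hg hfin =>
      hG g (by simpa using hg) (Submonoid.isOfFinOrder_coe.2 hfin)
    have : (⟨y * x * y⁻¹, hconjH⟩ : H) = ⟨x, hxH⟩ :=
      ih hHtf hHc (Subtype.ext (by simpa using hconj))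
    exact (mul_inv_eq_iff_eq_mul.1 (congrArg Subtype.val this)).symm

theorem isMulTorsionFree_of_isNilpotent {G : Type*} [Group G] [Group.IsNilpotent G]
    (hG : ∀ g : G, g ≠ 1 → ¬IsOfFinOrder g) : IsMulTorsionFree G := by
  obtain ⟨c, hc⟩ := Subgroup.nilpotent_iff_lowerCentralSeries.1 ‹Group.IsNilpotent G›
  have hc' : (⊤ : Subgroup G).lowerCentralSeries (c + 1) = ⊥ :=
    eq_bot_iff.2 (hc ▸ Subgroup.lowerCentralSeries_antitone ⊤ c.le_succ)
  exact ⟨fun k hk => pow_left_injective_of_lowerCentralSeries_eq_bot c hG hc' hk⟩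

theorem Commute.of_zpow_left {G : Type*} [Group G] [IsMulTorsionFree G] {x y : G} {k : ℤ}
    (hk : k ≠ 0) (h : Commute (x ^ k) y) : Commute x y := by
  have hconj : (y * x * y⁻¹) ^ k = x ^ k := by rw [conj_zpow, ← h.eq, mul_inv_cancel_right]
  exact (mul_inv_eq_iff_eq_mul.1 (zpow_left_injective hk hconj)).symm

/-- In a torsion-free nilpotent group, if `a^n` commutes with `b^m` for nonzero
integers `n, m`, then `a` commutes with `b`. -/
theorem commute_of_zpow_commute (G : Type*) [Group G]
    [Group.IsNilpotent G] (hT : ∀ g : G, g ≠ 1 → ¬IsOfFinOrder g)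
    (a b : G) (n m : ℤ) (hn : n ≠ 0) (hm : m ≠ 0)
    (h : Commute (a ^ n) (b ^ m)) : Commute a b := by
  have : IsMulTorsionFree G := isMulTorsionFree_of_isNilpotent hT
  exact ((h.of_zpow_left hn).symm.of_zpow_left hm).symm
end

section
/- Let G be a finitely generated torsion-free nilpotent group in which all centralizers of elements outside [G,G] are abelian (HFL-centralizers). Then for a, b ∈ G \ [G,G], a and b are co-centralized if and only if [a,b] = 1; in particular co-centralization is an equivalence relation on G \ [G,G]. -/
open scoped commutatorElement

/-! The only candidate witness is `c = a⁻¹ * b`, and since `b ∈ C_G(b)` it lies in `C_G(b)`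
exactly when `a` does; so co-centralization is just commutation. Transitivity of commutation
on `G \ [G,G]` then follows because `a` and `c` both lie in `C_G(b)`, which is abelian. -/

namespace Group

variable {G : Type*} [Group G]

def Cocentralized (a b : G) : Prop :=
  ∃ c ∈ Subgroup.centralizer {b}, b = a * c

theorem cocentralized_iff_commute (a b : G) : Cocentralized a b ↔ Commute a b := by
  have hb : b ∈ Subgroup.centralizer {b} := Subgroup.mem_centralizer_singleton_iff.2 rfl
  calc Cocentralized a b ↔ a⁻¹ * b ∈ Subgroup.centralizer {b} := by
        simp only [Cocentralized, ← inv_mul_eq_iff_eq_mul, exists_eq_right']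
    _ ↔ a ∈ Subgroup.centralizer {b} := by
        rw [Subgroup.mul_mem_cancel_right _ hb, inv_mem_iff]
    _ ↔ Commute a b := Subgroup.mem_centralizer_singleton_iff

end Group

theorem Commute.trans_of_isMulCommutative_centralizer {G : Type*} [Group G] {a b c : G}
    [IsMulCommutative (Subgroup.centralizer {b})] (hab : Commute a b) (hbc : Commute b c) :
    Commute a c :=
  setLike_mul_comm (s := Subgroup.centralizer {b}) (Subgroup.mem_centralizer_singleton_iff.2 hab)
    (Subgroup.mem_centralizer_singleton_iff.2 hbc.symm)

/-- In a finitely generated torsion-free nilpotent group `G` in which the centralizer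
of every element outside `[G,G]` is abelian (HFL-centralizers), two elements
`a, b ∈ G \ [G,G]` are co-centralized (`b = a·c` for some `c ∈ C_G(b)`) if and only if
`[a,b] = 1`; in particular co-centralization is an equivalence relation on `G \ [G,G]`. -/
theorem cocentralized_iff_commute (G : Type*) [Group G]
    (hHFL : ∀ a : G, a ∉ commutator G → IsMulCommutative (Subgroup.centralizer {a})) :
    (∀ a b : G, a ∉ commutator G → b ∉ commutator G →
        ((∃ c ∈ Subgroup.centralizer {b}, b = a * c) ↔ ⁅a, b⁆ = 1)) ∧
      Equivalence (fun a b : {g : G // g ∉ commutator G} =>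
        ∃ c ∈ Subgroup.centralizer {(b : G)}, (b : G) = (a : G) * c) := by
  refine ⟨fun a b _ _ => (Group.cocentralized_iff_commute a b).trans
    commutatorElement_eq_one_iff_commute.symm, ?_⟩
  show Equivalence fun a b : {g : G // g ∉ commutator G} => Group.Cocentralized (a : G) b
  simp only [Group.cocentralized_iff_commute]
  refine ⟨fun a => Commute.refl _, Commute.symm, fun {a b c} hab hbc => ?_⟩
  have := hHFL b b.2
  exact hab.trans_of_isMulCommutative_centralizer hbc
end
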